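/- arXiv:1009.3531 — 2 statements merged into one kernel-verified Lean document; each statement's English description precedes it below -/
import Mathlib

section
/- Let (R, 𝔪) be a commutative Noetherian local ring, 𝔞 and 𝔟 ideals of R, and 𝔭₁, …, 𝔭ₙ prime ideals of R such that 𝔞𝔟 ⊄ 𝔭ⱼ for all j ≤ n. Let x be an element of 𝔞𝔟 with x ∉ 𝔭ⱼ for all j ≤ n. Then there exist elements a₁, …, a_r ∈ 𝔞 and b₁, …, b_r ∈ 𝔟 such that x = a₁b₁ + ⋯ + a_r b_r, and such that for all i ≤ r and all j ≤ n, one has aᵢbᵢ ∉ 𝔭ⱼ and a₁b₁ + ⋯ + aᵢbᵢ ∉ 𝔭ⱼ. -/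
/-!
If `x` is a unit, `x = x * 1` already works. Otherwise no `𝔭ⱼ` is the maximal ideal, so every
`R ⧸ 𝔭ⱼ` is infinite, and by B. H. Neumann's lemma `R` is not a finite union of cosets of the
`𝔭ⱼ`: finitely many affine maps `t ↦ C t + E`, none of which has `C, E ∈ 𝔭ⱼ`, can be sent outside
every `𝔭ⱼ` by a single `t`. Fix `c ∈ 𝔞` and `d ∈ 𝔟` outside all `𝔭ⱼ` (prime avoidance).
A good representation of `w` extends to one of `w + a b` (when `w + a b` avoids the primes) by
appending `(a + c t)(b + d u)`, `(a + c t)(-d u)`, `(-c t)(b + d u)`, `(c t)(d u)` for generic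
`t`, `u`; and to one of `w + (y₁ + y₂)` by appending the generic product `(c t) d`, then `y₁`,
then `y₂`, and finally `(-c t) d`. Starting from `c d` and adding `x - c d ∈ 𝔞𝔟` gives `x`.
-/

open Ideal
open scoped Pointwise

section

variable {R : Type*} [CommRing R] {ι : Type*}

theorem Ideal.IsPrime.exists_setOf_mul_add_mem_subset_vadd {q : Ideal R} (hq : q.IsPrime)
    {C E : R} (h : C ∉ q ∨ E ∉ q) : ∃ t₀ : R, {t | C * t + E ∈ q} ⊆ t₀ +ᵥ (q : Set R) := by
  by_cases hbad : ∃ t₀, C * t₀ + E ∈ q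
  · obtain ⟨t₀, ht₀⟩ := hbad
    have hC : C ∉ q := fun hC => h.resolve_left (not_not.2 hC) <| by
      simpa using q.sub_mem ht₀ (q.mul_mem_right t₀ hC)
    refine ⟨t₀, fun t ht => mem_leftAddCoset_iff t₀ |>.2 ?_⟩
    refine (hq.mem_or_mem ?_).resolve_left hC
    rw [show C * (-t₀ + t) = (C * t + E) - (C * t₀ + E) by ring]
    exact q.sub_mem ht ht₀
  · exact ⟨0, fun t ht => (hbad ⟨t, ht⟩).elim⟩

theorem Ideal.exists_forall_mul_add_notMem [Finite ι] {p : ι → Ideal R} (hp : ∀ i, (p i).IsPrime)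
    (hinf : ∀ i, Infinite (R ⧸ p i)) {κ : Type*} [Finite κ] (C E : κ → R)
    (h : ∀ k i, C k ∉ p i ∨ E k ∉ p i) : ∃ t, ∀ k i, C k * t + E k ∉ p i := by
  have := Fintype.ofFinite ι
  have := Fintype.ofFinite κ
  choose t₀ ht₀ using fun ki : κ × ι => (hp ki.2).exists_setOf_mul_add_mem_subset_vadd (h ki.1 ki.2)
  by_contra! hcover
  obtain ⟨ki, -, hfin⟩ := AddSubgroup.exists_finiteIndex_of_leftCoset_cover
    (H := fun ki : κ × ι => (p ki.2).toAddSubgroup) (g := t₀) (s := Finset.univ) <|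
    Set.eq_univ_of_forall fun t => by
      obtain ⟨k, i, hki⟩ := hcover t
      exact Set.mem_biUnion (Finset.mem_coe.2 (Finset.mem_univ (k, i))) (ht₀ (k, i) hki)
  exact (hinf ki.2).not_finite AddSubgroup.finite_quotient_of_finiteIndex

theorem Ideal.exists_mem_forall_notMem_of_forall_not_le [Finite ι] {p : ι → Ideal R}
    (hp : ∀ i, (p i).IsPrime) {I : Ideal R} (hI : ∀ i, ¬ I ≤ p i) : ∃ x ∈ I, ∀ i, x ∉ p i := by
  rcases isEmpty_or_nonempty ι with hι | ⟨⟨i₀⟩⟩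
  · exact ⟨0, I.zero_mem, isEmptyElim⟩
  by_contra! h
  obtain ⟨i, -, hi⟩ := (subset_union_prime_finite Set.finite_univ i₀ i₀ fun i _ _ _ => hp i).1
    fun x hx => by simpa using h x hx
  exact hI i hi

theorem Ideal.IsPrime.infinite_quotient_of_ne_maximalIdeal [IsLocalRing R] {q : Ideal R}
    (hq : q.IsPrime) (hne : q ≠ IsLocalRing.maximalIdeal R) : Infinite (R ⧸ q) := by
  rw [← not_finite_iff_infinite]
  intro hfin
  exact hne <| IsLocalRing.eq_maximalIdeal <|
    Ideal.Quotient.maximal_of_isField q (Finite.isField_of_domain (R ⧸ q))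

/-- `x = a₁ b₁ + ⋯ + aᵣ bᵣ` with `aᵢ ∈ 𝔞`, `bᵢ ∈ 𝔟`, `r ≥ 1`, such that every term and every
partial sum lies outside all `p i`. -/
inductive IsAvoidingProductSum (𝔞 𝔟 : Ideal R) (p : ι → Ideal R) : R → Prop
  | mul {a b : R} : a ∈ 𝔞 → b ∈ 𝔟 → (∀ i, a * b ∉ p i) → IsAvoidingProductSum 𝔞 𝔟 p (a * b)
  | add_mul {x a b : R} : IsAvoidingProductSum 𝔞 𝔟 p x → a ∈ 𝔞 → b ∈ 𝔟 → (∀ i, a * b ∉ p i) →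
      (∀ i, x + a * b ∉ p i) → IsAvoidingProductSum 𝔞 𝔟 p (x + a * b)

namespace IsAvoidingProductSum

variable {𝔞 𝔟 : Ideal R} {p : ι → Ideal R}

theorem exists_sum_range {x : R} (hx : IsAvoidingProductSum 𝔞 𝔟 p x) :
    ∃ (r : ℕ) (a b : ℕ → R), 0 < r ∧
      (∀ i < r, a i ∈ 𝔞) ∧ (∀ i < r, b i ∈ 𝔟) ∧
      x = ∑ i ∈ Finset.range r, a i * b i ∧
      (∀ i < r, ∀ j, a i * b i ∉ p j) ∧
      (∀ i < r, ∀ j, (∑ k ∈ Finset.range (i + 1), a k * b k) ∉ p j) := by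
  induction hx with
  | @mul a b ha hb hab =>
    exact ⟨1, fun _ => a, fun _ => b, one_pos, fun _ _ => ha, fun _ _ => hb, by simp,
      fun _ _ => hab, fun i hi => by simpa [Nat.lt_one_iff.1 hi] using hab⟩
  | @add_mul x a₀ b₀ _ ha₀ hb₀ hab₀ hxab₀ ih =>
    obtain ⟨r, a, b, hr, ha, hb, hsum, hterm, hpartial⟩ := ih
    let a' := Function.update a r a₀
    let b' := Function.update b r b₀
    have hprefix : ∀ i ≤ r, ∑ k ∈ Finset.range i, a' k * b' k = ∑ k ∈ Finset.range i, a k * b k :=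
      fun i hi => Finset.sum_congr rfl fun k hk => by
        simp [a', b', Function.update_of_ne (Finset.mem_range.1 hk |>.trans_le hi).ne]
    have hlast : ∑ k ∈ Finset.range (r + 1), a' k * b' k = x + a₀ * b₀ := by
      rw [Finset.sum_range_succ, hprefix r le_rfl, ← hsum]
      simp [a', b']
    refine ⟨r + 1, a', b', r.succ_pos, ?_, ?_, hlast.symm, ?_, ?_⟩
    all_goals refine Nat.forall_lt_succ_right.2 ⟨fun i hi => ?_, ?_⟩
    · simpa [a', hi.ne] using ha i hi
    · simpa [a'] using ha₀
    · simpa [b', hi.ne] using hb i hi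
    · simpa [b'] using hb₀
    · simpa [a', b', hi.ne] using hterm i hi
    · simpa [a', b'] using hab₀
    · rw [hprefix (i + 1) hi]
      exact hpartial i hi
    · rwa [hlast]

variable [Finite ι]

theorem add_mul_of_notMem (hp : ∀ i, (p i).IsPrime) (hinf : ∀ i, Infinite (R ⧸ p i))
    (hnle : ∀ i, ¬ 𝔞 * 𝔟 ≤ p i) {w a b : R} (hw : IsAvoidingProductSum 𝔞 𝔟 p w) (ha : a ∈ 𝔞)
    (hb : b ∈ 𝔟) (hwab : ∀ i, w + a * b ∉ p i) : IsAvoidingProductSum 𝔞 𝔟 p (w + a * b) := by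
  obtain ⟨c, hc, hcp⟩ :=
    exists_mem_forall_notMem_of_forall_not_le hp fun i h => hnle i (mul_le_left.trans h)
  obtain ⟨d, hd, hdp⟩ :=
    exists_mem_forall_notMem_of_forall_not_le hp fun i h => hnle i (mul_le_right.trans h)
  obtain ⟨t, ht⟩ := exists_forall_mul_add_notMem hp hinf ![c, c, c * b] ![a, 0, w + a * b]
    fun k i => by fin_cases k <;> simp [hcp i, hwab i]
  have ha' : ∀ i, c * t + a ∉ p i := ht 0
  have hct : ∀ i, c * t ∉ p i := fun i => by simpa using ht 1 i
  have hcbt : ∀ i, c * b * t + (w + a * b) ∉ p i := ht 2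
  obtain ⟨u, hu⟩ := exists_forall_mul_add_notMem hp hinf
    ![d, d, (c * t + a) * d, -(c * t * d)] ![b, 0, w + (c * t + a) * b, w + a * b]
    fun k i => by
      fin_cases k <;> simp [hdp i, (hp i).mul_notMem (ha' i) (hdp i),
        (hp i).mul_notMem (hct i) (hdp i)]
  have hb' : ∀ i, d * u + b ∉ p i := hu 0
  have hdu : ∀ i, d * u ∉ p i := fun i => by simpa using hu 1 i
  have hdu₂ : ∀ i, (c * t + a) * d * u + (w + (c * t + a) * b) ∉ p i := hu 2
  have hdu₃ : ∀ i, -(c * t * d) * u + (w + a * b) ∉ p i := hu 3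
  have h₁ : IsAvoidingProductSum 𝔞 𝔟 p (w + (c * t + a) * (d * u + b)) :=
    hw.add_mul (add_mem (mul_mem_right t 𝔞 hc) ha) (add_mem (mul_mem_right u 𝔟 hd) hb)
      (fun i => (hp i).mul_notMem (ha' i) (hb' i))
      (fun i => by convert hdu₂ i using 2; ring)
  have h₂ := h₁.add_mul (add_mem (mul_mem_right t 𝔞 hc) ha) (neg_mem (mul_mem_right u 𝔟 hd))
      (fun i => (hp i).mul_notMem (ha' i) (by simpa using hdu i))
      (fun i => by convert hcbt i using 2; ring)
  have h₃ := h₂.add_mul (neg_mem (mul_mem_right t 𝔞 hc)) (add_mem (mul_mem_right u 𝔟 hd) hb)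
      (fun i => (hp i).mul_notMem (by simpa using hct i) (hb' i))
      (fun i => by convert hdu₃ i using 2; ring)
  have h₄ := h₃.add_mul (mul_mem_right t 𝔞 hc) (mul_mem_right u 𝔟 hd)
      (fun i => (hp i).mul_notMem (hct i) (hdu i))
      (fun i => by convert hwab i using 2; ring)
  convert h₄ using 1
  ring

theorem add_of_mem_mul (hp : ∀ i, (p i).IsPrime) (hinf : ∀ i, Infinite (R ⧸ p i))
    (hnle : ∀ i, ¬ 𝔞 * 𝔟 ≤ p i) {w y : R} (hw : IsAvoidingProductSum 𝔞 𝔟 p w) (hy : y ∈ 𝔞 * 𝔟)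
    (hwy : ∀ i, w + y ∉ p i) : IsAvoidingProductSum 𝔞 𝔟 p (w + y) := by
  induction hy using Submodule.mul_induction_on' generalizing w with
  | mem_mul_mem a ha b hb => exact hw.add_mul_of_notMem hp hinf hnle ha hb hwy
  | add y₁ _ y₂ _ ih₁ ih₂ =>
    obtain ⟨c, hc, hcp⟩ :=
    exists_mem_forall_notMem_of_forall_not_le hp fun i h => hnle i (mul_le_left.trans h)
    obtain ⟨d, hd, hdp⟩ :=
    exists_mem_forall_notMem_of_forall_not_le hp fun i h => hnle i (mul_le_right.trans h)
    have hcd : ∀ i, c * d ∉ p i := fun i => (hp i).mul_notMem (hcp i) (hdp i)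
    obtain ⟨t, ht⟩ := exists_forall_mul_add_notMem hp hinf (fun _ => c * d)
      ![0, w, w + y₁, w + (y₁ + y₂)] fun _ i => .inl (hcd i)
    have ht₀ : ∀ i, c * d * t + 0 ∉ p i := ht 0
    have ht₁ : ∀ i, c * d * t + w ∉ p i := ht 1
    have ht₂ : ∀ i, c * d * t + (w + y₁) ∉ p i := ht 2
    have ht₃ : ∀ i, c * d * t + (w + (y₁ + y₂)) ∉ p i := ht 3
    have hcdt : ∀ i, c * t * d ∉ p i := fun i => by convert ht₀ i using 2; ring
    have h₁ := hw.add_mul (mul_mem_right t 𝔞 hc) hd hcdt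
      (fun i => by convert ht₁ i using 2; ring)
    have h₂ := ih₁ h₁ (fun i => by convert ht₂ i using 2; ring)
    have h₃ := ih₂ h₂ (fun i => by convert ht₃ i using 2; ring)
    have h₄ := h₃.add_mul (neg_mem (mul_mem_right t 𝔞 hc)) hd
      (fun i => by simpa using hcdt i) (fun i => by convert hwy i using 2; ring)
    convert h₄ using 1
    ring

end IsAvoidingProductSum

theorem isAvoidingProductSum_of_mem_mul [Finite ι] {𝔞 𝔟 : Ideal R} {p : ι → Ideal R}
    (hp : ∀ i, (p i).IsPrime) (hinf : ∀ i, Infinite (R ⧸ p i)) (hnle : ∀ i, ¬ 𝔞 * 𝔟 ≤ p i)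
    {x : R} (hx : x ∈ 𝔞 * 𝔟) (hxp : ∀ i, x ∉ p i) : IsAvoidingProductSum 𝔞 𝔟 p x := by
  obtain ⟨c, hc, hcp⟩ :=
    exists_mem_forall_notMem_of_forall_not_le hp fun i h => hnle i (mul_le_left.trans h)
  obtain ⟨d, hd, hdp⟩ :=
    exists_mem_forall_notMem_of_forall_not_le hp fun i h => hnle i (mul_le_right.trans h)
  have hcd := IsAvoidingProductSum.mul hc hd fun i => (hp i).mul_notMem (hcp i) (hdp i)
  simpa using hcd.add_of_mem_mul hp hinf hnle (sub_mem hx (mul_mem_mul hc hd)) (by simpa using hxp)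

theorem isAvoidingProductSum_of_isUnit {𝔞 𝔟 : Ideal R} {p : ι → Ideal R} {x : R} (hu : IsUnit x)
    (hx : x ∈ 𝔞 * 𝔟) (hxp : ∀ i, x ∉ p i) : IsAvoidingProductSum 𝔞 𝔟 p x := by
  have h1 : (1 : R) ∈ 𝔟 := by
    rw [𝔟.eq_top_of_isUnit_mem (mul_le_right hx) hu]
    exact Submodule.mem_top
  simpa using IsAvoidingProductSum.mul (mul_le_left hx) h1 (by simpa using hxp)

theorem isAvoidingProductSum_of_isLocalRing [IsLocalRing R] [Finite ι] {𝔞 𝔟 : Ideal R}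
    {p : ι → Ideal R} (hp : ∀ i, (p i).IsPrime) (hnle : ∀ i, ¬ 𝔞 * 𝔟 ≤ p i) {x : R}
    (hx : x ∈ 𝔞 * 𝔟) (hxp : ∀ i, x ∉ p i) : IsAvoidingProductSum 𝔞 𝔟 p x := by
  by_cases hxm : x ∈ IsLocalRing.maximalIdeal R
  · refine isAvoidingProductSum_of_mem_mul hp (fun i => ?_) hnle hx hxp
    exact (hp i).infinite_quotient_of_ne_maximalIdeal fun h => hxp i (h ▸ hxm)
  · exact isAvoidingProductSum_of_isUnit (IsLocalRing.notMem_maximalIdeal.1 hxm) hx hxp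

end

theorem exists_sum_products_notMem_primes_general
    {R : Type} [CommRing R] [IsLocalRing R]
    (𝔞 𝔟 : Ideal R) (n : ℕ) (p : ℕ → Ideal R)
    (hp : ∀ j < n, (p j).IsPrime)
    (hnle : ∀ j < n, ¬ 𝔞 * 𝔟 ≤ p j)
    (x : R) (hx : x ∈ 𝔞 * 𝔟) (hxp : ∀ j < n, x ∉ p j) :
    ∃ (r : ℕ) (a b : ℕ → R), 0 < r ∧
      (∀ i < r, a i ∈ 𝔞) ∧ (∀ i < r, b i ∈ 𝔟) ∧
      x = ∑ i ∈ Finset.range r, a i * b i ∧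
      (∀ i < r, ∀ j < n, a i * b i ∉ p j) ∧
      (∀ i < r, ∀ j < n, (∑ k ∈ Finset.range (i + 1), a k * b k) ∉ p j) := by
  obtain ⟨r, a, b, hr, ha, hb, hsum, hterm, hpartial⟩ :=
    (isAvoidingProductSum_of_isLocalRing (p := fun j : Fin n => p j) (fun j => hp j j.2)
      (fun j => hnle j j.2) hx fun j => hxp j j.2).exists_sum_range
  exact ⟨r, a, b, hr, ha, hb, hsum, fun i hi j hj => hterm i hi ⟨j, hj⟩,
    fun i hi j hj => hpartial i hi ⟨j, hj⟩⟩

/-- **Lemma 2.1.** In a Noetherian local ring, an element `x ∈ 𝔞𝔟` avoiding finitely many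
primes `𝔭ⱼ` (none of which contains `𝔞𝔟`) can be written as `x = a₁b₁ + ⋯ + aᵣbᵣ` with
`aᵢ ∈ 𝔞`, `bᵢ ∈ 𝔟`, such that each `aᵢbᵢ` and each partial sum `a₁b₁ + ⋯ + aᵢbᵢ`
avoids all the primes `𝔭ⱼ`. -/
theorem exists_sum_products_notMem_primes
    {R : Type} [CommRing R] [IsNoetherianRing R] [IsLocalRing R]
    (𝔞 𝔟 : Ideal R) (n : ℕ) (p : ℕ → Ideal R)
    (hp : ∀ j < n, (p j).IsPrime)
    (hnle : ∀ j < n, ¬ 𝔞 * 𝔟 ≤ p j)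
    (x : R) (hx : x ∈ 𝔞 * 𝔟) (hxp : ∀ j < n, x ∉ p j) :
    ∃ (r : ℕ) (a b : ℕ → R), 0 < r ∧
      (∀ i < r, a i ∈ 𝔞) ∧ (∀ i < r, b i ∈ 𝔟) ∧
      x = ∑ i ∈ Finset.range r, a i * b i ∧
      (∀ i < r, ∀ j < n, a i * b i ∉ p j) ∧
      (∀ i < r, ∀ j < n, (∑ k ∈ Finset.range (i + 1), a k * b k) ∉ p j) :=
  exists_sum_products_notMem_primes_general 𝔞 𝔟 n p hp hnle x hx hxp
end

section
/- Let (R, 𝔪) be a commutative Noetherian local ring, 𝔞 an ideal of R, M a finitely generated R-module, and x ∈ 𝔞² an 𝔞-filter regular element of M. Then there exist 𝔞-filter regular elements a₁, …, a_r, b₁, …, b_r ∈ 𝔞 of M such that x = a₁b₁ + ⋯ + a_r b_r and such that a₁b₁ + ⋯ + aᵢbᵢ is an 𝔞-filter regular element of M for every i ≤ r. -/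
/-!
An element is `𝔞`-filter regular on `M` iff it lies outside every prime of the finite set
`P = Ass M \ V(𝔞)`. If `𝔞 ≠ R`, no prime of `P` is maximal, so every `R ⧸ p` is infinite and, by
Neumann's lemma, `R` is not a finite union of cosets of ideals of `P`. So for `y ∈ 𝔞` outside
`⋃ P` (prime avoidance) and finitely many affine conditions `c + t d ∉ p` with `d ∉ p`, some `t`
satisfies them all; every element the construction adds is such a `t y`.

Write `x = ∑ uᵢvᵢ` with `uᵢ, vᵢ ∈ 𝔞`. The identity `uv = (u+z)(v+z) + (-z)(u+z) + (v+z)(-z) + z²`,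
for a suitable `z`, turns this into a sum of products of filter regular elements of `𝔞`.
Inserting a term `y w` in front of each product keeps every partial sum outside `⋃ P`, and the
accumulated `y ∑ w` is cancelled by two final terms `y w'` and `y (-∑ w - w')`.
If `𝔞 = R`, take `x = x · 1`.
-/

open scoped Pointwise

theorem Ideal.Quotient.infinite_of_not_isMaximal {R : Type*} [CommRing R] (p : Ideal R)
    [p.IsPrime] (hp : ¬ p.IsMaximal) : Infinite (R ⧸ p) :=
  not_finite_iff_infinite.mp fun _ =>
    hp (Ideal.Quotient.maximal_of_isField p (Finite.isField_of_domain _))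

namespace FilterRegular

variable {R : Type*} [CommRing R] {𝔞 : Ideal R} {P : Set (Ideal R)}

def Avoids (P : Set (Ideal R)) (r : R) : Prop := ∀ p ∈ P, r ∉ p

def Admissible (𝔞 : Ideal R) (P : Set (Ideal R)) (r : R) : Prop := r ∈ 𝔞 ∧ Avoids P r

def sumProducts (L : List (R × R)) : R := (L.map fun q => q.1 * q.2).sum

def IsChain (𝔞 : Ideal R) (P : Set (Ideal R)) : R → List (R × R) → Prop
  | _, [] => True
  | c, q :: L => Admissible 𝔞 P q.1 ∧ Admissible 𝔞 P q.2 ∧ Avoids P (c + q.1 * q.2) ∧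
      IsChain 𝔞 P (c + q.1 * q.2) L

theorem Avoids.mul (hprime : ∀ p ∈ P, p.IsPrime) {a b : R} (ha : Avoids P a)
    (hb : Avoids P b) : Avoids P (a * b) :=
  fun p hp hab => ((hprime p hp).mem_or_mem hab).elim (ha p hp) (hb p hp)

theorem Admissible.neg {a : R} (ha : Admissible 𝔞 P a) : Admissible 𝔞 P (-a) :=
  ⟨𝔞.neg_mem ha.1, fun p hp h => ha.2 p hp (p.neg_mem_iff.mp h)⟩

theorem exists_admissible (hfin : P.Finite) (hprime : ∀ p ∈ P, p.IsPrime)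
    (h𝔞 : ∀ p ∈ P, ¬ 𝔞 ≤ p) : ∃ y, Admissible 𝔞 P y := by
  have hnot : ¬ (𝔞 : Set R) ⊆ ⋃ p ∈ P, (p : Set R) := fun h =>
    let ⟨p, hp, hle⟩ :=
      (Ideal.subset_union_prime_finite hfin (f := id) ⊥ ⊥ fun p hp _ _ => hprime p hp).mp h
    h𝔞 p hp hle
  obtain ⟨y, hy𝔞, hy⟩ := Set.not_subset.mp hnot
  exact ⟨y, hy𝔞, fun p hp hyp => hy (Set.mem_biUnion hp hyp)⟩

/-- Neumann's lemma: `R` is not a finite union of cosets of the ideals in `P`, and the set of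
`t` with `c + t * d ∈ p` is empty or a coset of `p` when `d ∉ p`. -/
theorem exists_forall_avoids_add_mul (hfin : P.Finite) (hprime : ∀ p ∈ P, p.IsPrime)
    (hinf : ∀ p ∈ P, Infinite (R ⧸ p)) (C : Finset (R × R)) (hC : ∀ cd ∈ C, Avoids P cd.2) :
    ∃ t : R, ∀ cd ∈ C, Avoids P (cd.1 + t * cd.2) := by
  classical
  by_contra! hbad
  simp only [Avoids, not_forall, not_not] at hbad
  let root (i : (R × R) × Ideal R) : R := Classical.epsilon fun t => i.1.1 + t * i.1.2 ∈ i.2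
  have hcovers :
      ⋃ i ∈ C ×ˢ hfin.toFinset, root i +ᵥ (i.2.toAddSubgroup : Set R) = Set.univ := by
    refine Set.eq_univ_of_forall fun t => ?_
    obtain ⟨cd, hcd, p, hp, ht⟩ := hbad t
    have hroot : cd.1 + root (cd, p) * cd.2 ∈ p :=
      Classical.epsilon_spec (p := fun s => cd.1 + s * cd.2 ∈ p) ⟨t, ht⟩
    have hdiff : (t - root (cd, p)) * cd.2 ∈ p := by
      convert p.sub_mem ht hroot using 1
      ring
    refine Set.mem_biUnion (x := (cd, p))
      (Finset.mem_product.mpr ⟨hcd, hfin.mem_toFinset.mpr hp⟩) ?_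
    rw [Set.mem_vadd_set_iff_neg_vadd_mem, vadd_eq_add, neg_add_eq_sub]
    exact ((hprime p hp).mem_or_mem hdiff).resolve_right (hC cd hcd p hp)
  obtain ⟨i, hi, hfi⟩ := AddSubgroup.exists_finiteIndex_of_leftCoset_cover hcovers
  exact @not_finite (R ⧸ i.2) (hinf i.2 (hfin.mem_toFinset.mp (Finset.mem_product.mp hi).2))
    AddSubgroup.finite_quotient_of_finiteIndex

@[simp] theorem sumProducts_nil : sumProducts ([] : List (R × R)) = 0 := rfl

@[simp] theorem sumProducts_cons (q : R × R) (L : List (R × R)) :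
    sumProducts (q :: L) = q.1 * q.2 + sumProducts L := List.sum_cons

@[simp] theorem sumProducts_append (L₁ L₂ : List (R × R)) :
    sumProducts (L₁ ++ L₂) = sumProducts L₁ + sumProducts L₂ := by
  simp [sumProducts]

theorem sumProducts_eq_sum_range (L : List (R × R)) :
    sumProducts L = ∑ k ∈ Finset.range L.length, (L.getD k 0).1 * (L.getD k 0).2 := by
  induction L with
  | nil => simp
  | cons q L ih => simp [Finset.sum_range_succ', ih, add_comm]

theorem exists_sumProducts_eq_of_mem_mul {I J : Ideal R} {x : R} (hx : x ∈ I * J) :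
    ∃ L : List (R × R), (∀ q ∈ L, q.1 ∈ I ∧ q.2 ∈ J) ∧ sumProducts L = x := by
  induction hx using Submodule.mul_induction_on' with
  | mem_mul_mem a ha b hb => exact ⟨[(a, b)], by simp [ha, hb], by simp⟩
  | add u _ v _ hu hv =>
    obtain ⟨L₁, hL₁, rfl⟩ := hu
    obtain ⟨L₂, hL₂, rfl⟩ := hv
    refine ⟨L₁ ++ L₂, fun q hq => ?_, sumProducts_append L₁ L₂⟩
    exact (List.mem_append.mp hq).elim (hL₁ q) (hL₂ q)

def shiftPairs (z : R) (q : R × R) : List (R × R) :=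
  [(q.1 + z, q.2 + z), (-z, q.1 + z), (q.2 + z, -z), (z, z)]

theorem sumProducts_flatMap_shiftPairs (z : R) (L : List (R × R)) :
    sumProducts (L.flatMap (shiftPairs z)) = sumProducts L := by
  induction L with
  | nil => rfl
  | cons q L ih =>
    simp only [List.flatMap_cons, sumProducts_append, ih, shiftPairs, sumProducts_cons,
      sumProducts_nil]
    ring

theorem exists_admissible_pairs (hfin : P.Finite) (hprime : ∀ p ∈ P, p.IsPrime)
    (hinf : ∀ p ∈ P, Infinite (R ⧸ p)) {y : R} (hy : Admissible 𝔞 P y) {x : R}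
    (hx : x ∈ 𝔞 ^ 2) :
    ∃ L : List (R × R), (∀ q ∈ L, Admissible 𝔞 P q.1 ∧ Admissible 𝔞 P q.2) ∧
      sumProducts L = x := by
  classical
  obtain ⟨L, hL, rfl⟩ := exists_sumProducts_eq_of_mem_mul (pow_two 𝔞 ▸ hx)
  obtain ⟨t, ht⟩ := exists_forall_avoids_add_mul hfin hprime hinf
    ((insert 0 (L.flatMap fun q => [q.1, q.2]).toFinset).image (·, y))
    (Finset.forall_mem_image.mpr fun _ _ => hy.2)
  simp only [Finset.forall_mem_image, Finset.forall_mem_insert, List.mem_toFinset,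
    List.mem_flatMap, forall_exists_index, and_imp] at ht
  have hz : Admissible 𝔞 P (t * y) := ⟨𝔞.mul_mem_left t hy.1, by simpa using ht.1⟩
  have hshift (q) (hq : q ∈ L) : Admissible 𝔞 P (q.1 + t * y) ∧ Admissible 𝔞 P (q.2 + t * y) :=
    ⟨⟨𝔞.add_mem (hL q hq).1 hz.1, ht.2 _ q hq (by simp)⟩,
      ⟨𝔞.add_mem (hL q hq).2 hz.1, ht.2 _ q hq (by simp)⟩⟩
  refine ⟨L.flatMap (shiftPairs (t * y)), fun q' hq' => ?_,
    sumProducts_flatMap_shiftPairs _ L⟩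
  obtain ⟨q, hq, hq'⟩ := List.mem_flatMap.mp hq'
  obtain ⟨h₁, h₂⟩ := hshift q hq
  simp only [shiftPairs, List.mem_cons, List.not_mem_nil, or_false] at hq'
  rcases hq' with rfl | rfl | rfl | rfl
  exacts [⟨h₁, h₂⟩, ⟨hz.neg, h₁⟩, ⟨h₂, hz.neg⟩, ⟨hz, hz⟩]

theorem isChain_append {c : R} {L₁ L₂ : List (R × R)} :
    IsChain 𝔞 P c (L₁ ++ L₂) ↔ IsChain 𝔞 P c L₁ ∧ IsChain 𝔞 P (c + sumProducts L₁) L₂ := by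
  induction L₁ generalizing c with
  | nil => simp [IsChain]
  | cons q L ih => simp [IsChain, ih, add_assoc, and_assoc]

theorem IsChain.admissible_getD {c : R} {L : List (R × R)} (h : IsChain 𝔞 P c L) {i : ℕ}
    (hi : i < L.length) : Admissible 𝔞 P (L.getD i 0).1 ∧ Admissible 𝔞 P (L.getD i 0).2 := by
  induction L generalizing c i with
  | nil => simp at hi
  | cons q L ih =>
    cases i with
    | zero => exact ⟨h.1, h.2.1⟩
    | succ i => exact ih h.2.2.2 (Nat.lt_of_succ_lt_succ hi)

theorem IsChain.avoids_add_sum_range {c : R} {L : List (R × R)} (h : IsChain 𝔞 P c L) {i : ℕ}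
    (hi : i < L.length) :
    Avoids P (c + ∑ k ∈ Finset.range (i + 1), (L.getD k 0).1 * (L.getD k 0).2) := by
  induction L generalizing c i with
  | nil => simp at hi
  | cons q L ih =>
    cases i with
    | zero => simpa using h.2.2.1
    | succ i =>
      rw [Finset.sum_range_succ']
      simpa [add_comm, add_left_comm, add_assoc] using ih h.2.2.2 (Nat.lt_of_succ_lt_succ hi)

theorem exists_isChain_pair (hfin : P.Finite) (hprime : ∀ p ∈ P, p.IsPrime)
    (hinf : ∀ p ∈ P, Infinite (R ⧸ p)) {y : R} (hy : Admissible 𝔞 P y) (c : R) {a b : R}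
    (ha : Admissible 𝔞 P a) (hb : Admissible 𝔞 P b) :
    ∃ w ∈ 𝔞, IsChain 𝔞 P c [(y, w), (a, b)] := by
  classical
  have hyy := hy.2.mul hprime hy.2
  obtain ⟨t, ht⟩ := exists_forall_avoids_add_mul hfin hprime hinf
    {(0, y), (c, y * y), (c + a * b, y * y)} (by simp [hy.2, hyy])
  simp only [Finset.mem_insert, Finset.mem_singleton, forall_eq_or_imp, forall_eq] at ht
  obtain ⟨hw, hcw, hcwab⟩ := ht
  refine ⟨t * y, 𝔞.mul_mem_left t hy.1, hy, ⟨𝔞.mul_mem_left t hy.1, by simpa using hw⟩, ?_,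
    ha, hb, ?_, trivial⟩
  · convert hcw using 1
    ring
  · convert hcwab using 1
    ring

theorem exists_isChain_interleave (hfin : P.Finite) (hprime : ∀ p ∈ P, p.IsPrime)
    (hinf : ∀ p ∈ P, Infinite (R ⧸ p)) {y : R} (hy : Admissible 𝔞 P y) (c : R)
    (T : List (R × R)) (hT : ∀ q ∈ T, Admissible 𝔞 P q.1 ∧ Admissible 𝔞 P q.2) :
    ∃ L : List (R × R), IsChain 𝔞 P c L ∧ ∃ w ∈ 𝔞, sumProducts L = sumProducts T + y * w := by
  induction T generalizing c with
  | nil => exact ⟨[], trivial, 0, 𝔞.zero_mem, by simp⟩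
  | cons q T ih =>
    obtain ⟨hq₁, hq₂⟩ := hT q List.mem_cons_self
    obtain ⟨w, hw, hpair⟩ := exists_isChain_pair hfin hprime hinf hy c hq₁ hq₂
    obtain ⟨L, hL, w', hw', hsum⟩ :=
      ih (c + sumProducts [(y, w), q]) fun q' hq' => hT q' (List.mem_cons_of_mem q hq')
    refine ⟨[(y, w), q] ++ L, isChain_append.mpr ⟨hpair, hL⟩, w + w', 𝔞.add_mem hw hw', ?_⟩
    simp only [sumProducts_append, hsum, sumProducts_cons, sumProducts_nil]
    ring

theorem exists_isChain_add_mul (hfin : P.Finite) (hprime : ∀ p ∈ P, p.IsPrime)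
    (hinf : ∀ p ∈ P, Infinite (R ⧸ p)) {y : R} (hy : Admissible 𝔞 P y) {c v : R} (hv : v ∈ 𝔞)
    (hcv : Avoids P (c + y * v)) : ∃ w, IsChain 𝔞 P c [(y, w), (y, v - w)] := by
  classical
  have hyy := hy.2.mul hprime hy.2
  have hny : Avoids P (-y) := hy.neg.2
  obtain ⟨t, ht⟩ := exists_forall_avoids_add_mul hfin hprime hinf
    {(0, y), (c, y * y), (v, -y)} (by simp [hy.2, hyy, hny])
  simp only [Finset.mem_insert, Finset.mem_singleton, forall_eq_or_imp, forall_eq] at ht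
  obtain ⟨hw, hcw, hvw⟩ := ht
  have hcw' : Avoids P (c + y * (t * y)) := by
    convert hcw using 1
    ring
  refine ⟨t * y, hy, ⟨𝔞.mul_mem_left t hy.1, by simpa using hw⟩, hcw', hy,
    ⟨𝔞.sub_mem hv (𝔞.mul_mem_left t hy.1), by simpa [sub_eq_add_neg] using hvw⟩, ?_, trivial⟩
  convert hcv using 1
  ring

theorem exists_isChain_of_mem_sq (hfin : P.Finite) (hprime : ∀ p ∈ P, p.IsPrime)
    (hinf : ∀ p ∈ P, Infinite (R ⧸ p)) (h𝔞 : ∀ p ∈ P, ¬ 𝔞 ≤ p) {x : R} (hx : x ∈ 𝔞 ^ 2)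
    (hxP : Avoids P x) : ∃ L : List (R × R), L ≠ [] ∧ IsChain 𝔞 P 0 L ∧ sumProducts L = x := by
  obtain ⟨y, hy⟩ := exists_admissible hfin hprime h𝔞
  obtain ⟨T, hT, rfl⟩ := exists_admissible_pairs hfin hprime hinf hy hx
  obtain ⟨L, hL, w, hw, hsum⟩ := exists_isChain_interleave hfin hprime hinf hy 0 T hT
  obtain ⟨w', hw'⟩ := exists_isChain_add_mul hfin hprime hinf hy (c := sumProducts L)
    (𝔞.neg_mem hw) (by rwa [hsum, mul_neg, add_neg_cancel_right])
  refine ⟨L ++ [(y, w'), (y, -w - w')], by simp, isChain_append.mpr ⟨hL, by rwa [zero_add]⟩, ?_⟩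
  simp only [sumProducts_append, hsum, sumProducts_cons, sumProducts_nil]
  ring

end FilterRegular

/-- **Corollary 2.2.** If `x ∈ 𝔞²` is an `𝔞`-filter regular element of `M` over a Noetherian
local ring, then `x = a₁b₁ + ⋯ + aᵣbᵣ` where all `aᵢ, bᵢ ∈ 𝔞` are `𝔞`-filter regular elements
of `M` and all partial sums `a₁b₁ + ⋯ + aᵢbᵢ` are `𝔞`-filter regular elements of `M`. -/
theorem exists_sum_products_filter_regular
    {R : Type} [CommRing R] [IsNoetherianRing R] [IsLocalRing R]
    (𝔞 : Ideal R) (M : Type) [AddCommGroup M] [Module R M] [Module.Finite R M]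
    (x : R) (hx : x ∈ 𝔞 ^ 2)
    (hfr : ∀ p ∈ associatedPrimes R M, ¬ 𝔞 ≤ p → x ∉ p) :
    ∃ (r : ℕ) (a b : ℕ → R), 0 < r ∧
      (∀ i < r, a i ∈ 𝔞) ∧ (∀ i < r, b i ∈ 𝔞) ∧
      (∀ i < r, ∀ p ∈ associatedPrimes R M, ¬ 𝔞 ≤ p → a i ∉ p) ∧
      (∀ i < r, ∀ p ∈ associatedPrimes R M, ¬ 𝔞 ≤ p → b i ∉ p) ∧
      x = ∑ i ∈ Finset.range r, a i * b i ∧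
      (∀ i < r, ∀ p ∈ associatedPrimes R M, ¬ 𝔞 ≤ p →
        (∑ k ∈ Finset.range (i + 1), a k * b k) ∉ p) := by
  by_cases htop : 𝔞 = ⊤
  · subst htop
    refine ⟨1, fun _ => x, fun _ => 1, one_pos, by simp, by simp, fun _ _ => hfr,
      fun _ _ p hp _ => (Ideal.ne_top_iff_one p).mp hp.isPrime.ne_top, by simp, ?_⟩
    simpa using hfr
  set P : Set (Ideal R) := {p | p ∈ associatedPrimes R M ∧ ¬ 𝔞 ≤ p}
  have hprime (p) (hp : p ∈ P) : p.IsPrime := hp.1.isPrime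
  have hinf (p) (hp : p ∈ P) : Infinite (R ⧸ p) :=
    have := hprime p hp
    Ideal.Quotient.infinite_of_not_isMaximal p fun hmax =>
      hp.2 (IsLocalRing.eq_maximalIdeal hmax ▸ IsLocalRing.le_maximalIdeal htop)
  obtain ⟨L, hne, hL, rfl⟩ := FilterRegular.exists_isChain_of_mem_sq
    ((associatedPrimes.finite R M).subset fun _ hp => hp.1) hprime hinf (fun _ hp => hp.2) hx
    (fun p hp => hfr p hp.1 hp.2)
  refine ⟨L.length, fun i => (L.getD i 0).1, fun i => (L.getD i 0).2,
    List.length_pos_iff.mpr hne,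
    fun i hi => (hL.admissible_getD hi).1.1, fun i hi => (hL.admissible_getD hi).2.1,
    fun i hi p hp h𝔞 => (hL.admissible_getD hi).1.2 p ⟨hp, h𝔞⟩,
    fun i hi p hp h𝔞 => (hL.admissible_getD hi).2.2 p ⟨hp, h𝔞⟩,
    FilterRegular.sumProducts_eq_sum_range L,
    fun i hi p hp h𝔞 => by simpa using hL.avoids_add_sum_range hi p ⟨hp, h𝔞⟩⟩
end
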